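/- Let 2 ≤ n < m < λ be integers with n not dividing m. Let y(t) = Σ_{i≥m} a_i t^i ∈ ℂ[[t]] with a_m ≠ 0, a_i = 0 for all m < i < λ, and a_λ ≠ 0, and set φ(t) = (t^n, y(t)). Let S' = {p·n + q·m : p, q ∈ ℕ, p + q ≥ 1}, and assume n + λ ∉ S'. Let A, B ∈ m ⊂ ℂ[[x,y]] define a singular vector field X = A ∂/∂x + B ∂/∂y whose linear part L(X) is NOT nilpotent. Set P(t) = A(t^n,y(t))·y'(t) − B(t^n,y(t))·n·t^{n−1}. Then P ≠ 0, and υ := ord_t P + 1 satisfies υ ≤ λ + n; moreover, if υ < λ + n, then υ ∈ S', υ ≥ 2n, and υ ≠ m. (In terms of the contact exponent j = υ − n of X with Γ: j ≤ λ, and j < λ implies j is of the form p·n + q·m − n with j ≥ n and j ≠ m − n.) -/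

import Mathlib

/-!
Write `A = ∑ aᵢⱼ xⁱ yʲ` and `B = ∑ bᵢⱼ xⁱ yʲ`. Since `y` has no terms strictly between `t ^ m` and
`t ^ λ`, the monomial `xⁱ yʲ` contributes to `P` only in the orders `p n + q m - 1` with
`(p, q) = (i, j + 1)` or `(i + 1, j)`, and in orders at least `n (i + j) + λ - 1`. Below order
`λ + n - 1` every nonzero coefficient of `P` is therefore of the form `p n + q m - 1` with
`p + q ≥ 2`. At the orders `2n - 1`, `n + m - 1` and `λ + n - 1` only the linear monomials
contribute (this is where `n ∤ m` and `n + λ ∉ S'` enter), with coefficients `-n b₁₀`,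
`(m a₁₀ - n b₀₁) a_m` and `(λ a₁₀ - n b₀₁) a_λ`. If all three vanished, then
`a₁₀ = b₁₀ = b₀₁ = 0` and `L(X)` would be nilpotent.
-/

open PowerSeries

/-- Substitution of `(x(t), y(t))` (both with zero constant term) into a
two-variable formal power series. -/
noncomputable def substPS (xt yt : PowerSeries ℂ) (f : MvPowerSeries (Fin 2) ℂ) :
    PowerSeries ℂ :=
  PowerSeries.mk fun k =>
    ∑ ij ∈ Finset.range (k + 1) ×ˢ Finset.range (k + 1),
      MvPowerSeries.coeff (Finsupp.single 0 ij.1 + Finsupp.single 1 ij.2) f *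
        PowerSeries.coeff k (xt ^ ij.1 * yt ^ ij.2)

/-- The maximal ideal of `ℂ[[x,y]]`: series with zero constant term. -/
noncomputable def mIdeal : Ideal (MvPowerSeries (Fin 2) ℂ) :=
  RingHom.ker ((MvPowerSeries.constantCoeff : MvPowerSeries (Fin 2) ℂ →+* ℂ))

/-- The linear part of the vector field `X = A ∂/∂x + B ∂/∂y`: the matrix of the
degree-1 coefficients of `A` (first row) and `B` (second row). -/
noncomputable def linPart (A B : MvPowerSeries (Fin 2) ℂ) : Matrix (Fin 2) (Fin 2) ℂ :=
  Matrix.of fun i j =>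
    MvPowerSeries.coeff (Finsupp.single j 1) (if i = 0 then A else B)

section Exponents

variable {n m p q : ℕ}

theorem add_mul_le_mul_add_mul (hnm : n ≤ m) : (p + q) * n ≤ p * n + q * m := by
  nlinarith

theorem mul_add_mul_ne_of_not_dvd (hn : 0 < n) (hnd : ¬ n ∣ m) (hpq : 2 ≤ p + q) :
    p * n + q * m ≠ m := by
  intro h
  rcases Nat.eq_zero_or_pos q with rfl | hq
  · exact hnd ⟨p, by rw [← h]; ring⟩
  · have hm : 0 < m := Nat.pos_of_ne_zero fun h0 => hnd (h0 ▸ dvd_zero n)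
    nlinarith

theorem add_ne_mul_add_mul_of_not_dvd (hn : 0 < n) (hnm : n < m) (hnd : ¬ n ∣ m)
    (hpq : 3 ≤ p + q) : n + m ≠ p * n + q * m := by
  intro h
  rcases Nat.eq_zero_or_pos p with rfl | hp
  · nlinarith
  · refine mul_add_mul_ne_of_not_dvd (p := p - 1) (q := q) hn hnd (by omega) ?_
    have : p * n = (p - 1) * n + n := by
      rw [← Nat.succ_mul, Nat.succ_eq_add_one, Nat.sub_add_cancel hp]
    omega

end Exponents

noncomputable abbrev coeffXY (f : MvPowerSeries (Fin 2) ℂ) (i j : ℕ) : ℂ :=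
  MvPowerSeries.coeff (Finsupp.single 0 i + Finsupp.single 1 j) f

theorem coeff_pow_mul_pow_of_lt {xt yt : ℂ⟦X⟧} (hx : constantCoeff xt = 0)
    (hy : constantCoeff yt = 0) {i j k : ℕ} (hk : k < i + j) :
    coeff k (xt ^ i * yt ^ j) = 0 := by
  have hdvd : X ^ (i + j) ∣ xt ^ i * yt ^ j := by
    rw [pow_add]
    exact mul_dvd_mul (pow_dvd_pow_of_dvd (X_dvd_iff.mpr hx) i)
      (pow_dvd_pow_of_dvd (X_dvd_iff.mpr hy) j)
  exact X_pow_dvd_iff.mp hdvd k hk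

theorem coeff_substPS_of_le {xt yt : ℂ⟦X⟧} (hx : constantCoeff xt = 0)
    (hy : constantCoeff yt = 0) (f : MvPowerSeries (Fin 2) ℂ) {a k : ℕ} (hak : a ≤ k) :
    coeff a (substPS xt yt f) =
      ∑ ij ∈ Finset.range (k + 1) ×ˢ Finset.range (k + 1),
        coeffXY f ij.1 ij.2 * coeff a (xt ^ ij.1 * yt ^ ij.2) := by
  rw [substPS, coeff_mk]
  refine Finset.sum_subset (fun ij hij => ?_) (fun ij _ hij => ?_)
  · simp only [Finset.mem_product, Finset.mem_range] at hij ⊢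
    omega
  · simp only [Finset.mem_product, Finset.mem_range, not_and_or, not_lt] at hij
    rw [coeff_pow_mul_pow_of_lt hx hy (by omega), mul_zero]

theorem coeff_substPS_mul {xt yt : ℂ⟦X⟧} (hx : constantCoeff xt = 0)
    (hy : constantCoeff yt = 0) (f : MvPowerSeries (Fin 2) ℂ) (g : ℂ⟦X⟧) (k : ℕ) :
    coeff k (substPS xt yt f * g) =
      ∑ ij ∈ Finset.range (k + 1) ×ˢ Finset.range (k + 1),
        coeffXY f ij.1 ij.2 * coeff k (xt ^ ij.1 * yt ^ ij.2 * g) := by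
  rw [coeff_mul, Finset.sum_congr rfl fun ab hab => by
    rw [coeff_substPS_of_le hx hy f (k := k)
      (by rw [Finset.HasAntidiagonal.mem_antidiagonal] at hab; omega), Finset.sum_mul],
    Finset.sum_comm]
  refine Finset.sum_congr rfl fun ij _ => ?_
  rw [coeff_mul, Finset.mul_sum]
  simp only [mul_assoc]

section Support

variable {m lam : ℕ} {y : ℂ⟦X⟧}

theorem eq_or_le_of_coeff_pow_ne_zero (hml : m ≤ lam)
    (hy : ∀ i, coeff i y ≠ 0 → i = m ∨ lam ≤ i) (j : ℕ) {r : ℕ} (hr : coeff r (y ^ j) ≠ 0) :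
    r = j * m ∨ (0 < j ∧ j * m + lam ≤ r + m) := by
  induction j generalizing r with
  | zero =>
    rw [pow_zero, coeff_one] at hr
    exact Or.inl (by simpa using hr)
  | succ j ih =>
    rw [pow_succ, coeff_mul] at hr
    obtain ⟨⟨a, b⟩, hab, hne⟩ := Finset.exists_ne_zero_of_sum_ne_zero hr
    rw [Finset.HasAntidiagonal.mem_antidiagonal] at hab
    have ha := ih (left_ne_zero_of_mul hne)
    have hb := hy b (right_ne_zero_of_mul hne)
    rw [add_mul, one_mul]
    generalize j * m = jm at ha ⊢
    omega

theorem eq_or_le_of_coeff_pow_mul_derivative_ne_zero (hml : m ≤ lam)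
    (hy : ∀ i, coeff i y ≠ 0 → i = m ∨ lam ≤ i) (j : ℕ) {r : ℕ}
    (hr : coeff r (y ^ j * d⁄dX ℂ y) ≠ 0) :
    r + 1 = (j + 1) * m ∨ j * m + lam ≤ r + 1 := by
  have hpow : coeff (r + 1) (y ^ (j + 1)) ≠ 0 := by
    -- `y ^ j * y'` is `(y ^ (j + 1))' / (j + 1)`
    have hd : d⁄dX ℂ (y ^ (j + 1)) = ((j + 1 : ℕ) : ℂ⟦X⟧) * (y ^ j * d⁄dX ℂ y) := by
      rw [Derivation.leibniz_pow, Nat.add_sub_cancel, nsmul_eq_mul, smul_eq_mul]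
    have hcoeff := coeff_derivative (y ^ (j + 1)) r
    rw [hd, ← map_natCast (C (R := ℂ)), coeff_C_mul] at hcoeff
    intro h0
    rw [h0, zero_mul] at hcoeff
    exact mul_ne_zero (Nat.cast_ne_zero.mpr j.succ_ne_zero) hr hcoeff
  have := eq_or_le_of_coeff_pow_ne_zero hml hy (j + 1) hpow
  rw [add_mul, one_mul] at this ⊢
  omega

theorem constantCoeff_eq_zero_of_support (hm : 0 < m)
    (hy : ∀ i, coeff i y ≠ 0 → i = m ∨ lam ≤ i) (hml : m ≤ lam) : constantCoeff y = 0 := by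
  rw [← coeff_zero_eq_constantCoeff_apply]
  by_contra h
  have := hy 0 h
  omega

end Support

/-- `P = A(φ)·y' − B(φ)·x'` for the branch `φ(t) = (t ^ n, y(t))`. -/
noncomputable def contactSeries (n : ℕ) (y : ℂ⟦X⟧) (A B : MvPowerSeries (Fin 2) ℂ) : ℂ⟦X⟧ :=
  substPS (X ^ n) y A * d⁄dX ℂ y - substPS (X ^ n) y B * (C (n : ℂ) * X ^ (n - 1))

noncomputable def contactTerm (n : ℕ) (y : ℂ⟦X⟧) (A B : MvPowerSeries (Fin 2) ℂ) (i j : ℕ) :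
    ℂ⟦X⟧ :=
  (C (coeffXY A i j) * d⁄dX ℂ y - C (coeffXY B i j) * (C (n : ℂ) * X ^ (n - 1))) *
    (X ^ n) ^ i * y ^ j

theorem coeff_contactSeries {n : ℕ} (hn : 0 < n) {y : ℂ⟦X⟧} (hy : constantCoeff y = 0)
    (A B : MvPowerSeries (Fin 2) ℂ) (k : ℕ) :
    coeff k (contactSeries n y A B) =
      ∑ ij ∈ Finset.range (k + 1) ×ˢ Finset.range (k + 1),
        coeff k (contactTerm n y A B ij.1 ij.2) := by
  have hx : constantCoeff (X ^ n : ℂ⟦X⟧) = 0 := by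
    rw [map_pow, constantCoeff_X, zero_pow hn.ne']
  rw [contactSeries, map_sub, coeff_substPS_mul hx hy, coeff_substPS_mul hx hy,
    ← Finset.sum_sub_distrib]
  refine Finset.sum_congr rfl fun ij _ => ?_
  have hC : ∀ (a : ℂ) (g : ℂ⟦X⟧),
      C a * g * (X ^ n) ^ ij.1 * y ^ ij.2 = C a * ((X ^ n) ^ ij.1 * y ^ ij.2 * g) :=
    fun _ _ => by ring
  rw [contactTerm, sub_mul, sub_mul, map_sub, hC, hC, coeff_C_mul, coeff_C_mul]

theorem contactTerm_zero_zero (n : ℕ) (y : ℂ⟦X⟧) {A B : MvPowerSeries (Fin 2) ℂ}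
    (hA : A ∈ mIdeal) (hB : B ∈ mIdeal) : contactTerm n y A B 0 0 = 0 := by
  have hA0 : coeffXY A 0 0 = 0 := by simpa [coeffXY, mIdeal] using hA
  have hB0 : coeffXY B 0 0 = 0 := by simpa [coeffXY, mIdeal] using hB
  simp [contactTerm, hA0, hB0]

theorem contactTerm_eq (n : ℕ) (y : ℂ⟦X⟧) (A B : MvPowerSeries (Fin 2) ℂ) (i j : ℕ) :
    contactTerm n y A B i j =
      C (coeffXY A i j) * (X ^ (n * i) * (y ^ j * d⁄dX ℂ y)) -
        C (coeffXY B i j * n) * (X ^ (n * i + (n - 1)) * y ^ j) := by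
  rw [contactTerm, map_mul, pow_add, ← pow_mul]
  ring

section ContactSeries

variable {n m lam : ℕ} {y : ℂ⟦X⟧} {A B : MvPowerSeries (Fin 2) ℂ}

theorem eq_or_le_of_coeff_contactTerm_ne_zero (hn : 0 < n) (hnm : n ≤ m) (hml : m ≤ lam)
    (hy : ∀ i, coeff i y ≠ 0 → i = m ∨ lam ≤ i) {i j k : ℕ}
    (h : coeff k (contactTerm n y A B i j) ≠ 0) :
    k + 1 = n * i + m * (j + 1) ∨ k + 1 = n * (i + 1) + m * j ∨ n * (i + j) + lam ≤ k + 1 := by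
  rw [contactTerm_eq, map_sub, coeff_C_mul, coeff_C_mul] at h
  have hnj : n * j ≤ j * m := by rw [mul_comm j]; exact Nat.mul_le_mul_right j hnm
  simp only [mul_add, mul_one, mul_comm m j]
  by_cases hA : coeff k (X ^ (n * i) * (y ^ j * d⁄dX ℂ y)) = 0
  · rw [hA, mul_zero, zero_sub, neg_ne_zero] at h
    have hB := right_ne_zero_of_mul h
    rw [coeff_X_pow_mul'] at hB
    split_ifs at hB with hk
    · rcases eq_or_le_of_coeff_pow_ne_zero hml hy j hB with hr | ⟨hj, hr⟩
      · omega
      · have : n * j + m ≤ j * m + n := by nlinarith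
        omega
    · exact absurd rfl hB
  · rw [coeff_X_pow_mul'] at hA
    split_ifs at hA with hk
    · have := eq_or_le_of_coeff_pow_mul_derivative_ne_zero hml hy j hA
      rw [add_mul, one_mul] at this
      omega
    · exact absurd rfl hA

theorem exists_eq_of_coeff_contactSeries_ne_zero (hn : 0 < n) (hnm : n ≤ m) (hml : m ≤ lam)
    (hy : ∀ i, coeff i y ≠ 0 → i = m ∨ lam ≤ i) (hA : A ∈ mIdeal) (hB : B ∈ mIdeal) {k : ℕ}
    (hk : k + 1 < lam + n) (h : coeff k (contactSeries n y A B) ≠ 0) :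
    ∃ p q : ℕ, 2 ≤ p + q ∧ k + 1 = p * n + q * m := by
  rw [coeff_contactSeries hn (constantCoeff_eq_zero_of_support (by omega) hy hml)] at h
  obtain ⟨⟨i, j⟩, -, hij⟩ := Finset.exists_ne_zero_of_sum_ne_zero h
  dsimp only at hij
  have hij0 : 0 < i + j := by
    by_contra h0
    obtain ⟨rfl, rfl⟩ : i = 0 ∧ j = 0 := by omega
    rw [contactTerm_zero_zero n y hA hB, map_zero] at hij
    exact hij rfl
  rcases eq_or_le_of_coeff_contactTerm_ne_zero hn hnm hml hy hij with h1 | h1 | h1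
  · exact ⟨i, j + 1, by omega, by rw [h1]; ring⟩
  · exact ⟨i + 1, j, by omega, by rw [h1]; ring⟩
  · have := Nat.le_mul_of_pos_right n hij0
    omega

theorem coeff_contactTerm_one_zero_add_zero_one (hn : 0 < n) (hnm : n < m) (hml : m ≤ lam)
    (hy : ∀ i, coeff i y ≠ 0 → i = m ∨ lam ≤ i) {r : ℕ} (hr0 : 0 < r) (hrl : r ≤ lam)
    (h2m : n + r ≠ 2 * m) :
    coeff (n + r - 1) (contactTerm n y A B 1 0) + coeff (n + r - 1) (contactTerm n y A B 0 1) =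
      (r * coeffXY A 1 0 - n * coeffXY B 0 1) * coeff r y -
        if r = n then n * coeffXY B 1 0 else 0 := by
  have hyy : coeff (n + r - 1) (y * d⁄dX ℂ y) = 0 := by
    by_contra hc
    have := eq_or_le_of_coeff_pow_mul_derivative_ne_zero hml hy 1 (by rwa [pow_one])
    omega
  have hdy : coeff (r - 1) (d⁄dX ℂ y) = r * coeff r y := by
    rw [coeff_derivative, Nat.sub_add_cancel hr0, Nat.cast_sub hr0]
    ring
  simp only [contactTerm_eq, map_sub, coeff_C_mul, coeff_X_pow_mul', pow_zero, pow_one,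
    one_mul, mul_one, mul_zero, zero_add]
  rw [show n + r - 1 - n = r - 1 by omega, hdy, coeff_X_pow, hyy,
    show n + r - 1 - (n - 1) = r by omega, if_pos (show n ≤ n + r - 1 by omega),
    if_pos (show n - 1 ≤ n + r - 1 by omega)]
  simp only [show n + r - 1 = n + (n - 1) ↔ r = n by omega]
  split_ifs <;> ring

theorem coeff_contactSeries_add_sub_one (hn : 0 < n) (hnm : n < m) (hml : m ≤ lam)
    (hy : ∀ i, coeff i y ≠ 0 → i = m ∨ lam ≤ i) (hA : A ∈ mIdeal) (hB : B ∈ mIdeal) {r : ℕ}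
    (hr0 : 0 < r) (hrl : r ≤ lam) (h2m : n + r ≠ 2 * m)
    (hr : ∀ p q : ℕ, 3 ≤ p + q → n + r ≠ p * n + q * m) :
    coeff (n + r - 1) (contactSeries n y A B) =
      (r * coeffXY A 1 0 - n * coeffXY B 0 1) * coeff r y -
        if r = n then n * coeffXY B 1 0 else 0 := by
  rw [coeff_contactSeries hn (constantCoeff_eq_zero_of_support (by omega) hy hml)]
  rw [Finset.sum_eq_add (1, 0) (0, 1) (by decide) ?_ (fun h => ?_) (fun h => ?_)]
  · exact coeff_contactTerm_one_zero_add_zero_one hn hnm hml hy hr0 hrl h2m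
  · rintro ⟨i, j⟩ - ⟨h10, h01⟩
    by_cases h00 : i = 0 ∧ j = 0
    · rw [h00.1, h00.2, contactTerm_zero_zero n y hA hB, map_zero]
    by_contra hc
    dsimp only at hc
    have hij : 2 ≤ i + j := by
      simp only [ne_eq, Prod.mk.injEq] at h10 h01
      omega
    rcases eq_or_le_of_coeff_contactTerm_ne_zero hn hnm.le hml hy hc with h1 | h1 | h1
    · exact hr i (j + 1) (by omega) (by rw [mul_comm i, mul_comm (j + 1)]; omega)
    · exact hr (i + 1) j (by omega) (by rw [mul_comm (i + 1), mul_comm j]; omega)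
    · have := Nat.mul_le_mul_left n hij
      omega
  · exact absurd (by simp only [Finset.mem_product, Finset.mem_range]; omega) h
  · exact absurd (by simp only [Finset.mem_product, Finset.mem_range]; omega) h

end ContactSeries

theorem isNilpotent_linPart {A B : MvPowerSeries (Fin 2) ℂ} (hA10 : coeffXY A 1 0 = 0)
    (hB10 : coeffXY B 1 0 = 0) (hB01 : coeffXY B 0 1 = 0) : IsNilpotent (linPart A B) := by
  simp only [coeffXY, Finsupp.single_zero, add_zero, zero_add] at hA10 hB10 hB01
  refine ⟨2, ?_⟩
  ext i j
  fin_cases i <;> fin_cases j <;>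
    simp [pow_two, Matrix.mul_apply, Fin.sum_univ_two, linPart, hA10, hB10, hB01]

theorem exists_coeff_contactSeries_ne_zero {n m lam : ℕ} (hn : 0 < n) (hnm : n < m)
    (hml : m < lam) (hnd : ¬ n ∣ m) {y : ℂ⟦X⟧} (hy : ∀ i, coeff i y ≠ 0 → i = m ∨ lam ≤ i)
    (hm : coeff m y ≠ 0) (hlam : coeff lam y ≠ 0)
    (hS : ∀ p q : ℕ, 1 ≤ p + q → n + lam ≠ p * n + q * m) {A B : MvPowerSeries (Fin 2) ℂ}
    (hA : A ∈ mIdeal) (hB : B ∈ mIdeal) (hL : ¬ IsNilpotent (linPart A B)) :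
    ∃ k, k + 1 ≤ lam + n ∧ coeff k (contactSeries n y A B) ≠ 0 := by
  by_contra! h
  have hn0 : coeff n y = 0 := by_contra fun hc => by have := hy n hc; omega
  have hcn := coeff_contactSeries_add_sub_one hn hnm hml.le hy hA hB (r := n) hn (by omega)
    (by omega) fun p q hpq => by have := add_mul_le_mul_add_mul hnm.le (p := p) (q := q); nlinarith
  have hcm := coeff_contactSeries_add_sub_one hn hnm hml.le hy hA hB (r := m) (by omega)
    hml.le (by omega) fun p q hpq => add_ne_mul_add_mul_of_not_dvd hn hnm hnd hpq
  have hcl := coeff_contactSeries_add_sub_one hn hnm hml.le hy hA hB (r := lam) (by omega)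
    le_rfl (by simpa using hS 0 2 (by omega)) fun p q hpq => hS p q (by omega)
  rw [h _ (by omega), hn0, mul_zero, zero_sub, if_pos rfl, eq_comm, neg_eq_zero] at hcn
  rw [h _ (by omega), if_neg hnm.ne', sub_zero, eq_comm, mul_eq_zero, or_iff_left hm] at hcm
  rw [h _ (by omega), if_neg (by omega), sub_zero, eq_comm, mul_eq_zero, or_iff_left hlam] at hcl
  have hnC : (n : ℂ) ≠ 0 := Nat.cast_ne_zero.mpr hn.ne'
  have hA10 : coeffXY A 1 0 = 0 := by
    have : ((m : ℂ) - lam) * coeffXY A 1 0 = 0 := by linear_combination hcm - hcl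
    exact (mul_eq_zero.mp this).resolve_left
      (sub_ne_zero.mpr (Nat.cast_injective.ne hml.ne))
  refine hL (isNilpotent_linPart hA10 ((mul_eq_zero.mp hcn).resolve_left hnC) ?_)
  rw [hA10, mul_zero, zero_sub, neg_eq_zero] at hcm
  exact (mul_eq_zero.mp hcm).resolve_left hnC

theorem contact_of_non_nilpotent_bounded_by_lambda
    (n m lam : ℕ) (hn : 2 ≤ n) (hnm : n < m) (hmlam : m < lam) (hnd : ¬ n ∣ m)
    (y : PowerSeries ℂ)
    (hlow : ∀ i < m, PowerSeries.coeff i y = 0)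
    (hm : PowerSeries.coeff m y ≠ 0)
    (hmid : ∀ i, m < i → i < lam → PowerSeries.coeff i y = 0)
    (hlam : PowerSeries.coeff lam y ≠ 0)
    (hnotin : (n + lam) ∉ {s : ℕ | ∃ p q : ℕ, 1 ≤ p + q ∧ s = p * n + q * m})
    (A B : MvPowerSeries (Fin 2) ℂ) (hA : A ∈ mIdeal) (hB : B ∈ mIdeal)
    (hnonnil : ¬ IsNilpotent (linPart A B)) :
    substPS (PowerSeries.X ^ n) y A * PowerSeries.derivativeFun y -
        substPS (PowerSeries.X ^ n) y B *
          (PowerSeries.C (n : ℂ) * PowerSeries.X ^ (n - 1)) ≠ 0 ∧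
    ∃ d : ℕ,
      PowerSeries.order
          (substPS (PowerSeries.X ^ n) y A * PowerSeries.derivativeFun y -
            substPS (PowerSeries.X ^ n) y B *
              (PowerSeries.C (n : ℂ) * PowerSeries.X ^ (n - 1))) = (d : ℕ∞) ∧
      d + 1 ≤ lam + n ∧
      (d + 1 < lam + n →
        (d + 1) ∈ {s : ℕ | ∃ p q : ℕ, 1 ≤ p + q ∧ s = p * n + q * m} ∧
        2 * n ≤ d + 1 ∧ d + 1 ≠ m) := by
  have hn0 : 0 < n := by omega
  have hy : ∀ i, coeff i y ≠ 0 → i = m ∨ lam ≤ i := fun i hi => by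
    by_contra! h
    rcases Nat.lt_or_gt_of_ne h.1 with h1 | h1
    exacts [hi (hlow i h1), hi (hmid i h1 h.2)]
  obtain ⟨k, hk, hPk⟩ := exists_coeff_contactSeries_ne_zero hn0 hnm hmlam hnd hy hm hlam
    (fun p q hpq he => hnotin ⟨p, q, hpq, he⟩) hA hB hnonnil
  have hP : contactSeries n y A B ≠ 0 := fun h => hPk (by rw [h, map_zero])
  refine ⟨hP, _, (coe_toNat_order hP).symm, ?_, fun hlt => ?_⟩
  · have := order_le k hPk
    rw [← coe_toNat_order hP, Nat.cast_le] at this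
    omega
  · obtain ⟨p, q, hpq, he⟩ := exists_eq_of_coeff_contactSeries_ne_zero hn0 hnm.le hmlam.le hy
      hA hB hlt (coeff_order hP)
    have := add_mul_le_mul_add_mul hnm.le (p := p) (q := q)
    exact ⟨⟨p, q, by omega, he⟩, by nlinarith, he ▸ mul_add_mul_ne_of_not_dvd hn0 hnd hpq⟩
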